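/- arXiv:2411.11687 — 3 statements merged into one kernel-verified Lean document; each statement's English description precedes it below -/
import Mathlib

section
/- Let x_1,…,x_n ∈ ℝ^m be nonzero vectors with pairwise non-negative inner products (⟨x_r, x_s⟩ ≥ 0 for all r,s), and let w_1,…,w_n ≥ 0 and v_1,…,v_n ≥ 0 be non-negative weights such that a = Σ_{r=1}^n w_r x_r ≠ 0 and b = Σ_{s=1}^n v_s x_s ≠ 0. Then sim(a,b) ≥ min_{r,s ∈ {1,…,n}} sim(x_r, x_s), where sim(u,v) = ⟨u,v⟩/(‖u‖‖v‖) is the cosine similarity. In particular, the cosine similarity of any two non-negative convex combinations of the x_r is at least the minimum pairwise cosine similarity of the x_r. -/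
open scoped RealInnerProductSpace

/-- Cosine similarity of two vectors in `ℝ^m`. -/
noncomputable def cosSim {m : ℕ} (u v : EuclideanSpace ℝ (Fin m)) : ℝ :=
  ⟪u, v⟫ / (‖u‖ * ‖v‖)

open Finset

/-! If `c ≥ 0` bounds every pairwise cosine similarity of the `x r` from below, that is
`c ‖x r‖ ‖x s‖ ≤ ⟪x r, x s⟫`, then expanding `⟪a, b⟫` bilinearly and bounding term by term gives
`⟪a, b⟫ ≥ c (∑ w r ‖x r‖) (∑ v s ‖x s‖)`, which by the triangle inequality is at least
`c ‖a‖ ‖b‖`. The sign of `c` is where the non-negativity of the inner products enters. -/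

section InnerProductSpace

variable {ι E : Type*} [NormedAddCommGroup E] [InnerProductSpace ℝ E]

theorem norm_sum_smul_le_sum_mul_norm (s : Finset ι) (x : ι → E) {w : ι → ℝ}
    (hw : ∀ i ∈ s, 0 ≤ w i) : ‖∑ i ∈ s, w i • x i‖ ≤ ∑ i ∈ s, w i * ‖x i‖ :=
  (norm_sum_le _ _).trans_eq <| sum_congr rfl fun i hi => norm_smul_of_nonneg (hw i hi) (x i)

theorem inner_sum_smul_sum_smul (s t : Finset ι) (x : ι → E) (w v : ι → ℝ) :
    ⟪∑ i ∈ s, w i • x i, ∑ j ∈ t, v j • x j⟫ = ∑ i ∈ s, ∑ j ∈ t, w i * v j * ⟪x i, x j⟫ := by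
  rw [sum_inner]
  refine sum_congr rfl fun i _ => ?_
  rw [real_inner_smul_left, inner_sum, mul_sum]
  exact sum_congr rfl fun j _ => by rw [real_inner_smul_right]; ring

theorem mul_norm_mul_norm_le_inner_sum_smul (s : Finset ι) {x : ι → E} {w v : ι → ℝ} {c : ℝ}
    (hc : 0 ≤ c) (hx : ∀ i ∈ s, ∀ j ∈ s, c * (‖x i‖ * ‖x j‖) ≤ ⟪x i, x j⟫)
    (hw : ∀ i ∈ s, 0 ≤ w i) (hv : ∀ j ∈ s, 0 ≤ v j) :
    c * (‖∑ i ∈ s, w i • x i‖ * ‖∑ j ∈ s, v j • x j‖) ≤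
      ⟪∑ i ∈ s, w i • x i, ∑ j ∈ s, v j • x j⟫ := calc
  _ ≤ c * ((∑ i ∈ s, w i * ‖x i‖) * ∑ j ∈ s, v j * ‖x j‖) := by
    gcongr
    · exact sum_nonneg fun i hi => mul_nonneg (hw i hi) (norm_nonneg _)
    · exact norm_sum_smul_le_sum_mul_norm s x hw
    · exact norm_sum_smul_le_sum_mul_norm s x hv
  _ = ∑ i ∈ s, ∑ j ∈ s, w i * v j * (c * (‖x i‖ * ‖x j‖)) := by
    rw [sum_mul_sum, mul_sum]
    refine sum_congr rfl fun i _ => ?_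
    rw [mul_sum]
    exact sum_congr rfl fun j _ => by ring
  _ ≤ ∑ i ∈ s, ∑ j ∈ s, w i * v j * ⟪x i, x j⟫ := by
    gcongr with i hi j hj
    · exact mul_nonneg (hw i hi) (hv j hj)
    · exact hx i hi j hj
  _ = _ := (inner_sum_smul_sum_smul s s x w v).symm

end InnerProductSpace

section CosSim

variable {m : ℕ} {u v : EuclideanSpace ℝ (Fin m)} {c : ℝ}

theorem cosSim_nonneg (h : 0 ≤ ⟪u, v⟫) : 0 ≤ cosSim u v :=
  div_nonneg h (by positivity)

theorem mul_norm_mul_norm_le_inner_of_le_cosSim (h : c ≤ cosSim u v) :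
    c * (‖u‖ * ‖v‖) ≤ ⟪u, v⟫ := by
  rcases eq_or_ne u 0 with rfl | hu
  · simp
  rcases eq_or_ne v 0 with rfl | hv
  · simp
  rwa [cosSim, le_div_iff₀ (by positivity)] at h

theorem le_cosSim_iff (hu : u ≠ 0) (hv : v ≠ 0) :
    c ≤ cosSim u v ↔ c * (‖u‖ * ‖v‖) ≤ ⟪u, v⟫ := by
  rw [cosSim, le_div_iff₀ (by positivity)]

end CosSim

theorem cosine_similarity_ge_min_pairwise_general
    {n m : ℕ} [NeZero n]
    (x : Fin n → EuclideanSpace ℝ (Fin m))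
    (hinner : ∀ r s, 0 ≤ ⟪x r, x s⟫)
    (w v : Fin n → ℝ)
    (hw : ∀ r, 0 ≤ w r) (hv : ∀ s, 0 ≤ v s)
    (a b : EuclideanSpace ℝ (Fin m))
    (ha : a = ∑ r, w r • x r) (hb : b = ∑ s, v s • x s)
    (ha0 : a ≠ 0) (hb0 : b ≠ 0) :
    cosSim a b ≥
      Finset.univ.inf' Finset.univ_nonempty
        (fun p : Fin n × Fin n => cosSim (x p.1) (x p.2)) := by
  set c := Finset.univ.inf' Finset.univ_nonempty
    (fun p : Fin n × Fin n => cosSim (x p.1) (x p.2))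
  have hc : 0 ≤ c := le_inf' _ _ fun p _ => cosSim_nonneg (hinner p.1 p.2)
  have hpair : ∀ r ∈ univ, ∀ s ∈ univ, c * (‖x r‖ * ‖x s‖) ≤ ⟪x r, x s⟫ := fun r _ s _ =>
    mul_norm_mul_norm_le_inner_of_le_cosSim (inf'_le _ (mem_univ (r, s)))
  rw [ge_iff_le, le_cosSim_iff ha0 hb0, ha, hb]
  exact mul_norm_mul_norm_le_inner_sum_smul univ hc hpair (fun r _ => hw r) fun s _ => hv s

/-- **Cosine similarity of non-negative combinations is at least the minimum pairwise
cosine similarity.** If `x 1, …, x n ∈ ℝ^m` are nonzero vectors with pairwise non-negative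
inner products, and `a = ∑ r, w r • x r ≠ 0`, `b = ∑ s, v s • x s ≠ 0` with non-negative
weights, then `sim(a,b) ≥ min_{r,s} sim(x r, x s)`. -/
theorem cosine_similarity_ge_min_pairwise
    {n m : ℕ} [NeZero n]
    (x : Fin n → EuclideanSpace ℝ (Fin m))
    (hx0 : ∀ r, x r ≠ 0)
    (hinner : ∀ r s, 0 ≤ ⟪x r, x s⟫)
    (w v : Fin n → ℝ)
    (hw : ∀ r, 0 ≤ w r) (hv : ∀ s, 0 ≤ v s)
    (a b : EuclideanSpace ℝ (Fin m))
    (ha : a = ∑ r, w r • x r) (hb : b = ∑ s, v s • x s)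
    (ha0 : a ≠ 0) (hb0 : b ≠ 0) :
    cosSim a b ≥
      Finset.univ.inf' Finset.univ_nonempty
        (fun p : Fin n × Fin n => cosSim (x p.1) (x p.2)) :=
  cosine_similarity_ge_min_pairwise_general x hinner w v hw hv a b ha hb ha0 hb0
end

section
/- Consider the multidimensional Hegselmann–Krause dynamics: n agents with opinions x_i(k) ∈ ℝ^m evolve by x_i(k+1) = (1/|N_i(k)|) Σ_{j ∈ N_i(k)} x_j(k), where N_i(k) = { j ∈ {1,…,n} : ‖x_i(k) − x_j(k)‖ ≤ R } for a fixed confidence radius R > 0 and ‖·‖ the Euclidean norm. Then for any initial condition the system terminates in finite time: there exists K ∈ ℕ such that x_i(k) = x_i(K) for every agent i and every k ≥ K. -/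
/-!
The truncated energy `V y = ∑ i, ∑ j, min (‖y i - y j‖ ^ 2) (R ^ 2)` is a Lyapunov function.
It agrees with the Dirichlet energy of the current neighbour graph up to terms that can only
shrink, and averaging over a symmetric reflexive graph lowers that Dirichlet energy by at least
four times the squared displacement; so every step lowers `V` by at least that much.

The trajectory is bounded, so a subsequence converges to some `X` along which the neighbour graph
is a fixed `G`. In the limit the displacement vanishes, so `X` is its own `G`-average, hence
constant along the edges of `G`; non-edges of `G` have length at least `R` in `X`. Thus the
neighbourhoods in `G` are exactly the level sets of `X`, the next state is constant on them, and
its energy is at most `V X`, a lower bound for `V` along the whole trajectory. From then on `V`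
cannot decrease, so nobody moves.
-/

open Finset Filter Topology RealInnerProductSpace

section NeighborAveraging

variable {ι E : Type*} {N : ι → Finset ι}

section Module

variable [AddCommGroup E] [Module ℝ E]

noncomputable def neighborAverage (N : ι → Finset ι) (y : ι → E) : ι → E :=
  fun i => ((N i).card : ℝ)⁻¹ • ∑ j ∈ N i, y j

def graphLaplacian (N : ι → Finset ι) (y : ι → E) : ι → E :=
  fun i => ∑ j ∈ N i, (y i - y j)

theorem graphLaplacian_eq_smul_sub_neighborAverage (hrefl : ∀ i, i ∈ N i) (y : ι → E) (i : ι) :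
    graphLaplacian N y i = ((N i).card : ℝ) • (y i - neighborAverage N y i) := by
  have hcard : ((N i).card : ℝ) ≠ 0 := by exact_mod_cast (card_pos.2 ⟨i, hrefl i⟩).ne'
  rw [graphLaplacian, neighborAverage, smul_sub, smul_inv_smul₀ hcard, sum_sub_distrib,
    sum_const, Nat.cast_smul_eq_nsmul]

end Module

variable [NormedAddCommGroup E]

theorem continuous_neighborAverage [NormedSpace ℝ E] (N : ι → Finset ι) :
    Continuous (neighborAverage N : (ι → E) → ι → E) := by
  unfold neighborAverage; fun_prop

theorem norm_neighborAverage_le [NormedSpace ℝ E] [Fintype ι] (hrefl : ∀ i, i ∈ N i) (y : ι → E) :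
    ‖neighborAverage N y‖ ≤ ‖y‖ := by
  refine (pi_norm_le_iff_of_nonneg (norm_nonneg y)).2 fun i => ?_
  have hcard : (0 : ℝ) < (N i).card := by exact_mod_cast card_pos.2 ⟨i, hrefl i⟩
  calc ‖neighborAverage N y i‖ ≤ ((N i).card : ℝ)⁻¹ * ∑ _j ∈ N i, ‖y‖ := by
        rw [neighborAverage, norm_smul, Real.norm_of_nonneg (inv_nonneg.2 hcard.le)]
        gcongr
        exact norm_sum_le_of_le _ fun j _ => norm_le_pi_norm y j
    _ = ‖y‖ := by rw [sum_const, nsmul_eq_mul, inv_mul_cancel_left₀ hcard.ne']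

variable [Fintype ι]

def dirichletEnergy (N : ι → Finset ι) (y : ι → E) : ℝ :=
  ∑ i, ∑ j ∈ N i, ‖y i - y j‖ ^ 2

variable [InnerProductSpace ℝ E]

omit [NormedAddCommGroup E] [InnerProductSpace ℝ E] in
theorem sum_sum_neighbors_comm {M : Type*} [AddCommMonoid M] (hN : ∀ i j, j ∈ N i ↔ i ∈ N j)
    (f : ι → ι → M) : ∑ i, ∑ j ∈ N i, f i j = ∑ i, ∑ j ∈ N i, f j i :=
  sum_comm' fun i j => by simp [hN i j]

theorem sum_sum_inner_sub_sub (hN : ∀ i j, j ∈ N i ↔ i ∈ N j) (z w : ι → E) :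
    ∑ i, ∑ j ∈ N i, ⟪z i - z j, w i - w j⟫ = 2 * ∑ i, ⟪graphLaplacian N z i, w i⟫ := by
  have hswap : ∑ i, ∑ j ∈ N i, ⟪z i - z j, w j⟫ = -∑ i, ∑ j ∈ N i, ⟪z i - z j, w i⟫ := by
    rw [sum_sum_neighbors_comm hN]
    simp only [← sum_neg_distrib, ← inner_neg_left, neg_sub]
  have hlap : ∑ i, ⟪graphLaplacian N z i, w i⟫ = ∑ i, ∑ j ∈ N i, ⟪z i - z j, w i⟫ := by
    simp only [graphLaplacian, sum_inner]
  simp only [inner_sub_right, sum_sub_distrib, hswap, hlap]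
  ring

theorem sum_sum_norm_sub_sq_le (hN : ∀ i j, j ∈ N i ↔ i ∈ N j)
    (hrefl : ∀ i, i ∈ N i) (v : ι → E) :
    ∑ i, ∑ j ∈ N i, ‖v i - v j‖ ^ 2 ≤ 4 * ∑ i, (((N i).card : ℝ) - 1) * ‖v i‖ ^ 2 := by
  classical
  have hN' : ∀ i j, j ∈ (N i).erase i ↔ i ∈ (N j).erase j := by
    simp only [mem_erase, hN]; tauto
  have hswap : ∑ i, ∑ j ∈ (N i).erase i, 2 * ‖v j‖ ^ 2 = ∑ i, ∑ j ∈ (N i).erase i, 2 * ‖v i‖ ^ 2 :=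
    sum_sum_neighbors_comm hN' _
  calc ∑ i, ∑ j ∈ N i, ‖v i - v j‖ ^ 2 = ∑ i, ∑ j ∈ (N i).erase i, ‖v i - v j‖ ^ 2 := by
        refine sum_congr rfl fun i _ => ?_
        rw [← add_sum_erase _ _ (hrefl i), sub_self, norm_zero]; simp
    _ ≤ ∑ i, ∑ j ∈ (N i).erase i, (2 * ‖v i‖ ^ 2 + 2 * ‖v j‖ ^ 2) := by
        gcongr with i _ j _
        nlinarith [parallelogram_law_with_norm ℝ (v i) (v j), sq_nonneg ‖v i + v j‖]
    _ = ∑ i, ∑ j ∈ (N i).erase i, 2 * ‖v i‖ ^ 2 + ∑ i, ∑ j ∈ (N i).erase i, 2 * ‖v j‖ ^ 2 := by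
        simp only [sum_add_distrib]
    _ = 4 * ∑ i, (((N i).card : ℝ) - 1) * ‖v i‖ ^ 2 := by
        rw [hswap, ← two_mul, mul_sum, mul_sum]
        refine sum_congr rfl fun i _ => ?_
        rw [sum_const, nsmul_eq_mul, cast_card_erase_of_mem (hrefl i)]
        ring

theorem dirichletEnergy_neighborAverage_add_le (hN : ∀ i j, j ∈ N i ↔ i ∈ N j)
    (hrefl : ∀ i, i ∈ N i) (y : ι → E) :
    dirichletEnergy N (neighborAverage N y) + 4 * ∑ i, ‖neighborAverage N y i - y i‖ ^ 2 ≤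
      dirichletEnergy N y := by
  set Δ := neighborAverage N y - y
  have hΔ : ∀ i, neighborAverage N y i - y i = Δ i := fun _ => rfl
  have hexpand : dirichletEnergy N (neighborAverage N y) = dirichletEnergy N y
      + 2 * ∑ i, ∑ j ∈ N i, ⟪y i - y j, Δ i - Δ j⟫ + ∑ i, ∑ j ∈ N i, ‖Δ i - Δ j‖ ^ 2 := by
    simp only [dirichletEnergy, mul_sum, ← sum_add_distrib]
    refine sum_congr rfl fun i _ => sum_congr rfl fun j _ => ?_
    rw [← norm_add_sq_real]
    congr 2
    simp only [Δ, Pi.sub_apply]; abel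
  have hcross : ∑ i, ∑ j ∈ N i, ⟪y i - y j, Δ i - Δ j⟫ =
      -2 * ∑ i, ((N i).card : ℝ) * ‖Δ i‖ ^ 2 := by
    rw [sum_sum_inner_sub_sub hN, mul_sum, mul_sum]
    refine sum_congr rfl fun i _ => ?_
    rw [graphLaplacian_eq_smul_sub_neighborAverage hrefl, ← neg_sub, hΔ, smul_neg, inner_neg_left,
      real_inner_smul_left, real_inner_self_eq_norm_sq]
    ring
  have hquad := sum_sum_norm_sub_sq_le hN hrefl Δ
  simp only [Δ, Pi.sub_apply] at hexpand hcross hquad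
  rw [hexpand, hcross]
  simp only [sub_mul, one_mul, sum_sub_distrib] at hquad
  linarith

theorem eq_of_mem_of_neighborAverage_eq (hN : ∀ i j, j ∈ N i ↔ i ∈ N j) (hrefl : ∀ i, i ∈ N i)
    {z : ι → E} (hz : neighborAverage N z = z) {i j : ι} (hj : j ∈ N i) : z i = z j := by
  have hL : ∀ i, graphLaplacian N z i = 0 := fun i => by
    rw [graphLaplacian_eq_smul_sub_neighborAverage hrefl, hz, sub_self, smul_zero]
  have henergy : dirichletEnergy N z = 0 := by
    simp only [dirichletEnergy, ← real_inner_self_eq_norm_sq, sum_sum_inner_sub_sub hN, hL,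
      inner_zero_left, sum_const_zero, mul_zero]
  have hi := (sum_eq_zero_iff_of_nonneg fun i _ => sum_nonneg fun j _ =>
    sq_nonneg _).1 henergy i (mem_univ i)
  have hij := (sum_eq_zero_iff_of_nonneg fun j _ => sq_nonneg _).1 hi j hj
  simpa [sub_eq_zero] using hij

end NeighborAveraging

theorem tendsto_subseq_of_bounded_of_finite {α β : Type*} [PseudoMetricSpace α] [ProperSpace α]
    [Finite β] {u : ℕ → α} (hu : Bornology.IsBounded (Set.range u)) (g : ℕ → β) :
    ∃ ψ : ℕ → ℕ, StrictMono ψ ∧ (∃ a, Tendsto (u ∘ ψ) atTop (𝓝 a)) ∧ ∃ b, ∀ t, g (ψ t) = b := by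
  obtain ⟨b, hb⟩ := Finite.exists_infinite_fiber g
  obtain ⟨σ, hσ, hσb⟩ := extraction_of_frequently_atTop
    (Nat.frequently_atTop_iff_infinite.2 (Set.infinite_coe_iff.1 hb))
  obtain ⟨a, -, φ, hφ, ha⟩ :=
    tendsto_subseq_of_bounded hu (x := u ∘ σ) fun t => Set.mem_range_self _
  exact ⟨σ ∘ φ, hσ.comp hφ, ⟨a, ha⟩, b, fun t => hσb (φ t)⟩

section HegselmannKrause

variable {ι E : Type*} [Fintype ι] [NormedAddCommGroup E] {R : ℝ}

noncomputable def hkNeighbors (R : ℝ) (y : ι → E) (i : ι) : Finset ι :=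
  univ.filter fun j => ‖y i - y j‖ ≤ R

noncomputable def hkStep [NormedSpace ℝ E] (R : ℝ) (y : ι → E) : ι → E :=
  neighborAverage (hkNeighbors R y) y

noncomputable def truncatedEnergy (R : ℝ) (y : ι → E) : ℝ :=
  ∑ i, ∑ j, min (‖y i - y j‖ ^ 2) (R ^ 2)

theorem mem_hkNeighbors {y : ι → E} {i j : ι} : j ∈ hkNeighbors R y i ↔ ‖y i - y j‖ ≤ R := by
  simp [hkNeighbors]

theorem mem_hkNeighbors_comm (y : ι → E) (i j : ι) :
    j ∈ hkNeighbors R y i ↔ i ∈ hkNeighbors R y j := by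
  rw [mem_hkNeighbors, mem_hkNeighbors, norm_sub_rev]

theorem self_mem_hkNeighbors (hR : 0 ≤ R) (y : ι → E) (i : ι) : i ∈ hkNeighbors R y i := by
  simp [mem_hkNeighbors, hR]

theorem continuous_truncatedEnergy (R : ℝ) : Continuous (truncatedEnergy R : (ι → E) → ℝ) := by
  unfold truncatedEnergy; fun_prop

theorem truncatedEnergy_add_dirichletEnergy_le (hR : 0 ≤ R) (y z : ι → E) :
    truncatedEnergy R z + dirichletEnergy (hkNeighbors R y) y ≤
      truncatedEnergy R y + dirichletEnergy (hkNeighbors R y) z := by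
  simp only [truncatedEnergy, dirichletEnergy, hkNeighbors, sum_filter,
    ← sum_add_distrib]
  refine sum_le_sum fun i _ => sum_le_sum fun j _ => ?_
  split_ifs with h
  · have : ‖y i - y j‖ ^ 2 ≤ R ^ 2 := pow_le_pow_left₀ (norm_nonneg _) h 2
    linarith [min_le_left (‖z i - z j‖ ^ 2) (R ^ 2), min_eq_left this]
  · have : R ^ 2 ≤ ‖y i - y j‖ ^ 2 := pow_le_pow_left₀ hR (not_le.1 h).le 2
    linarith [min_le_right (‖z i - z j‖ ^ 2) (R ^ 2), min_eq_right this]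

theorem truncatedEnergy_hkStep_add_le [InnerProductSpace ℝ E] (hR : 0 ≤ R) (y : ι → E) :
    truncatedEnergy R (hkStep R y) + 4 * ∑ i, ‖hkStep R y i - y i‖ ^ 2 ≤ truncatedEnergy R y := by
  have := truncatedEnergy_add_dirichletEnergy_le hR y (hkStep R y)
  have := dirichletEnergy_neighborAverage_add_le (mem_hkNeighbors_comm y)
    (self_mem_hkNeighbors hR y) y
  rw [hkStep] at *
  linarith

theorem truncatedEnergy_le_of_forall (hR : 0 ≤ R) {y z : ι → E}
    (h : ∀ i j, z i = z j ∨ R ≤ ‖y i - y j‖) : truncatedEnergy R z ≤ truncatedEnergy R y := by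
  refine sum_le_sum fun i _ => sum_le_sum fun j _ => ?_
  rcases h i j with hz | hy
  · rw [hz, sub_self, norm_zero]
    simp [sq_nonneg]
  · rw [min_eq_right (pow_le_pow_left₀ hR hy 2)]
    exact min_le_right _ _

variable [InnerProductSpace ℝ E] {x : ℕ → ι → E}

theorem antitone_truncatedEnergy (hR : 0 ≤ R) (hx : ∀ k, x (k + 1) = hkStep R (x k)) :
    Antitone fun k => truncatedEnergy R (x k) :=
  antitone_nat_of_succ_le fun k => by
    have := truncatedEnergy_hkStep_add_le hR (x k)
    rw [← hx] at this
    nlinarith [sum_nonneg fun i (_ : i ∈ univ) => sq_nonneg ‖x (k + 1) i - x k i‖]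

theorem isBounded_range_of_hkStep (hR : 0 ≤ R) (hx : ∀ k, x (k + 1) = hkStep R (x k)) :
    Bornology.IsBounded (Set.range x) := by
  refine isBounded_iff_forall_norm_le.2 ⟨‖x 0‖, Set.forall_mem_range.2 fun k => ?_⟩
  induction k with
  | zero => exact le_rfl
  | succ k ih =>
    rw [hx]
    exact (norm_neighborAverage_le (self_mem_hkNeighbors hR (x k)) (x k)).trans ih

omit [InnerProductSpace ℝ E] in
theorem eq_of_sum_norm_sub_sq_nonpos {y z : ι → E} (h : ∑ i, ‖y i - z i‖ ^ 2 ≤ 0) : y = z := by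
  funext i
  have := (sum_eq_zero_iff_of_nonneg fun i _ => sq_nonneg _).1
    (le_antisymm h (sum_nonneg fun i _ => sq_nonneg _)) i (mem_univ i)
  simpa [sub_eq_zero] using this

theorem eq_of_truncatedEnergy_le (hR : 0 ≤ R) (hx : ∀ k, x (k + 1) = hkStep R (x k)) {K : ℕ}
    (hK : ∀ k, truncatedEnergy R (x K) ≤ truncatedEnergy R (x k)) : ∀ k, K ≤ k → x k = x K := by
  intro k hk
  induction k, hk using Nat.le_induction with
  | base => rfl
  | succ k hk ih =>
    rw [← ih]
    have hstep := truncatedEnergy_hkStep_add_le hR (x k)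
    rw [← hx] at hstep
    exact eq_of_sum_norm_sub_sq_nonpos (by linarith [hK (k + 1), antitone_truncatedEnergy hR hx hk])

section Limit

variable {ψ : ℕ → ℕ} {X : ι → E} {G : ι → Finset ι}

theorem truncatedEnergy_le_of_tendsto (hR : 0 ≤ R) (hx : ∀ k, x (k + 1) = hkStep R (x k))
    (hψ : StrictMono ψ) (hX : Tendsto (x ∘ ψ) atTop (𝓝 X)) (k : ℕ) :
    truncatedEnergy R X ≤ truncatedEnergy R (x k) :=
  calc truncatedEnergy R X ≤ truncatedEnergy R (x (ψ k)) :=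
        ((antitone_truncatedEnergy hR hx).comp_monotone hψ.monotone).le_of_tendsto
          (((continuous_truncatedEnergy R).tendsto X).comp hX) k
    _ ≤ truncatedEnergy R (x k) := antitone_truncatedEnergy hR hx (hψ.id_le k)

omit [InnerProductSpace ℝ E] in
theorem le_norm_sub_of_tendsto (hX : Tendsto (x ∘ ψ) atTop (𝓝 X))
    (hG : ∀ t, hkNeighbors R (x (ψ t)) = G) {i j : ι} (hj : j ∉ G i) : R ≤ ‖X i - X j‖ := by
  have hclosed : IsClosed {y : ι → E | R ≤ ‖y i - y j‖} :=
    isClosed_le continuous_const (by fun_prop)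
  refine hclosed.mem_of_tendsto hX (Eventually.of_forall fun t => ?_)
  rw [← hG t, mem_hkNeighbors, not_le] at hj
  exact hj.le

theorem neighborAverage_eq_of_tendsto (hR : 0 ≤ R) (hx : ∀ k, x (k + 1) = hkStep R (x k))
    (hψ : StrictMono ψ) (hX : Tendsto (x ∘ ψ) atTop (𝓝 X))
    (hG : ∀ t, hkNeighbors R (x (ψ t)) = G) : neighborAverage G X = X := by
  have hnext : ∀ t, x (ψ t + 1) = neighborAverage G (x (ψ t)) := fun t => by rw [hx, hkStep, hG]
  have hlim : Tendsto (fun t => x (ψ t + 1)) atTop (𝓝 (neighborAverage G X)) := by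
    simpa only [hnext, Function.comp_def] using ((continuous_neighborAverage G).tendsto X).comp hX
  have hmoved : Tendsto (fun t => ∑ i, ‖x (ψ t + 1) i - x (ψ t) i‖ ^ 2) atTop
      (𝓝 (∑ i, ‖neighborAverage G X i - X i‖ ^ 2)) :=
    tendsto_finsetSum _ fun i _ =>
      ((tendsto_pi_nhds.1 hlim i).sub (tendsto_pi_nhds.1 hX i)).norm.pow 2
  have henergy := (continuous_truncatedEnergy (E := E) (ι := ι) R).tendsto
  have hle : truncatedEnergy R (neighborAverage G X) + 4 * ∑ i, ‖neighborAverage G X i - X i‖ ^ 2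
      ≤ truncatedEnergy R X :=
    le_of_tendsto_of_tendsto' (((henergy _).comp hlim).add (hmoved.const_mul 4))
      ((henergy _).comp hX) fun t => by
        have := truncatedEnergy_hkStep_add_le hR (x (ψ t))
        rwa [← hx] at this
  have hge : truncatedEnergy R X ≤ truncatedEnergy R (neighborAverage G X) :=
    ge_of_tendsto ((henergy _).comp hlim)
      (Eventually.of_forall fun t => truncatedEnergy_le_of_tendsto hR hx hψ hX _)
  exact eq_of_sum_norm_sub_sq_nonpos (by linarith)

theorem mem_iff_eq_of_tendsto (hR : 0 < R) (hx : ∀ k, x (k + 1) = hkStep R (x k))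
    (hψ : StrictMono ψ) (hX : Tendsto (x ∘ ψ) atTop (𝓝 X))
    (hG : ∀ t, hkNeighbors R (x (ψ t)) = G) {i j : ι} : j ∈ G i ↔ X i = X j := by
  have hsymm : ∀ i j, j ∈ G i ↔ i ∈ G j := fun i j => by
    rw [← hG 0]; exact mem_hkNeighbors_comm _ i j
  have hrefl : ∀ i, i ∈ G i := fun i => hG 0 ▸ self_mem_hkNeighbors hR.le _ i
  refine ⟨eq_of_mem_of_neighborAverage_eq hsymm hrefl
    (neighborAverage_eq_of_tendsto hR.le hx hψ hX hG), fun hXij => ?_⟩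
  by_contra hj
  have := le_norm_sub_of_tendsto hX hG hj
  rw [hXij, sub_self, norm_zero] at this
  linarith

theorem truncatedEnergy_succ_le_of_tendsto (hR : 0 < R) (hx : ∀ k, x (k + 1) = hkStep R (x k))
    (hψ : StrictMono ψ) (hX : Tendsto (x ∘ ψ) atTop (𝓝 X))
    (hG : ∀ t, hkNeighbors R (x (ψ t)) = G) :
    truncatedEnergy R (x (ψ 0 + 1)) ≤ truncatedEnergy R X := by
  refine truncatedEnergy_le_of_forall hR.le fun i j => ?_
  by_cases hj : j ∈ G i
  · have hGij : G i = G j := by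
      ext p
      rw [mem_iff_eq_of_tendsto hR hx hψ hX hG, mem_iff_eq_of_tendsto hR hx hψ hX hG,
        (mem_iff_eq_of_tendsto hR hx hψ hX hG).1 hj]
    left
    rw [hx, hkStep, hG 0]
    simp only [neighborAverage, hGij]
  · exact Or.inr (le_norm_sub_of_tendsto hX hG hj)

end Limit

end HegselmannKrause

/-- **Finite-time termination of the multidimensional Hegselmann–Krause dynamics.**
`n` agents with opinions `x k i ∈ ℝ^m` evolve by averaging over the neighbors within
Euclidean distance `R`: `x (k+1) i = (1/|N_i(k)|) ∑_{j ∈ N_i(k)} x k j` with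
`N_i(k) = { j : ‖x k i - x k j‖ ≤ R }`. Then the system terminates in finite time:
there is `K` such that `x k i = x K i` for every `i` and every `k ≥ K`. -/
theorem hegselmann_krause_terminates
    {n m : ℕ}
    (R : ℝ) (hR : 0 < R)
    (x : ℕ → Fin n → EuclideanSpace ℝ (Fin m))
    (hdyn : ∀ k i,
      x (k + 1) i =
        (((Finset.univ.filter fun j => ‖x k i - x k j‖ ≤ R).card : ℝ))⁻¹ •
          ∑ j ∈ Finset.univ.filter fun j => ‖x k i - x k j‖ ≤ R, x k j) :
    ∃ K : ℕ, ∀ k, K ≤ k → ∀ i, x k i = x K i := by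
  have hx : ∀ k, x (k + 1) = hkStep R (x k) := fun k => funext (hdyn k)
  obtain ⟨ψ, hψ, ⟨X, hX⟩, G, hG⟩ := tendsto_subseq_of_bounded_of_finite
    (isBounded_range_of_hkStep hR.le hx) fun k => hkNeighbors R (x k)
  have hK : ∀ k, truncatedEnergy R (x (ψ 0 + 1)) ≤ truncatedEnergy R (x k) := fun k =>
    (truncatedEnergy_succ_le_of_tendsto hR hx hψ hX hG).trans
      (truncatedEnergy_le_of_tendsto hR.le hx hψ hX k)
  exact ⟨ψ 0 + 1, fun k hk i => by rw [eq_of_truncatedEnergy_le hR.le hx hK k hk]⟩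
end

section
/- Let x_1,…,x_n ∈ ℝ^m and R > 0 be such that the configuration is a fixed point of the Hegselmann–Krause update: x_i = (1/|N_i|) Σ_{j ∈ N_i} x_j for every i, where N_i = { j : ‖x_i − x_j‖ ≤ R }. Then any two connected agents have identical opinions: for all i, j, if ‖x_i − x_j‖ ≤ R then x_i = x_j. Consequently, at a steady state of the distance-based ODRS dynamics the agents split into clusters, with exact consensus inside each cluster and pairwise distance greater than R between distinct cluster opinions. -/
/-!
At a fixed point the displacements `x i - x j` from an agent to its neighbours sum to zero.
Since the neighbour relation is symmetric, pairing the terms of `∑ i, ∑ j ∼ i, ‖x i - x j‖ ^ 2`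
turns it into `2 * ∑ i, ⟪x i, ∑ j ∼ i, (x i - x j)⟫ = 0`, so every term vanishes.
-/

open Finset RealInnerProductSpace

theorem sum_sub_eq_zero_of_eq_inv_card_smul_sum {ι K E : Type*} [DivisionRing K] [CharZero K]
    [AddCommGroup E] [Module K E] {s : Finset ι} (hs : s.Nonempty) (x : ι → E) {p : E}
    (hp : p = (#s : K)⁻¹ • ∑ j ∈ s, x j) : ∑ j ∈ s, (p - x j) = 0 := by
  have hcard : (#s : K) ≠ 0 := Nat.cast_ne_zero.mpr hs.card_pos.ne'
  rw [sum_sub_distrib, sum_const, ← Nat.cast_smul_eq_nsmul K, hp, smul_smul,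
    mul_inv_cancel₀ hcard, one_smul, sub_self]

section Balanced

variable {ι E : Type*} [Fintype ι] [NormedAddCommGroup E] [InnerProductSpace ℝ E]
  {r : ι → ι → Prop} [DecidableRel r] [Std.Symm r]

theorem sum_sum_norm_sub_sq_eq_two_mul_sum_inner (x : ι → E) :
    ∑ i, ∑ j with r i j, ‖x i - x j‖ ^ 2 = 2 * ∑ i, ⟪x i, ∑ j with r i j, (x i - x j)⟫ := by
  have hswap : ∑ i, ∑ j with r i j, ⟪x j, x i - x j⟫ = -∑ i, ∑ j with r i j, ⟪x i, x i - x j⟫ := by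
    simp only [sum_filter]
    rw [sum_comm, ← sum_neg_distrib]
    refine sum_congr rfl fun i _ => ?_
    rw [← sum_neg_distrib]
    refine sum_congr rfl fun j _ => ?_
    by_cases h : r i j
    · rw [if_pos (symm h), if_pos h, ← inner_neg_right, neg_sub]
    · rw [if_neg (mt symm h), if_neg h, neg_zero]
  calc ∑ i, ∑ j with r i j, ‖x i - x j‖ ^ 2
      = ∑ i, ∑ j with r i j, (⟪x i, x i - x j⟫ - ⟪x j, x i - x j⟫) := by
        simp only [← real_inner_self_eq_norm_sq, inner_sub_left]
    _ = 2 * ∑ i, ⟪x i, ∑ j with r i j, (x i - x j)⟫ := by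
        rw [sum_congr rfl fun i _ => sum_sub_distrib _ _, sum_sub_distrib, hswap]
        simp only [inner_sum]
        ring

theorem eq_of_rel_of_forall_sum_sub_eq_zero {x : ι → E}
    (hx : ∀ i, ∑ j with r i j, (x i - x j) = 0) {i j : ι} (hij : r i j) : x i = x j := by
  have henergy : ∑ i, ∑ j with r i j, ‖x i - x j‖ ^ 2 = 0 := by
    simp [sum_sum_norm_sub_sq_eq_two_mul_sum_inner, hx]
  have hterm := (sum_eq_zero_iff_of_nonneg fun i _ => sum_nonneg fun j _ => sq_nonneg ‖x i - x j‖).mp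
    henergy i (mem_univ i)
  have hdist := (sum_eq_zero_iff_of_nonneg fun j _ => sq_nonneg ‖x i - x j‖).mp hterm j
    (mem_filter.mpr ⟨mem_univ j, hij⟩)
  rwa [sq_eq_zero_iff, norm_sub_eq_zero_iff] at hdist

end Balanced

/-- **At a Hegselmann–Krause fixed point, connected agents agree.**
If `x : Fin n → ℝ^m` is a fixed point of the Hegselmann–Krause update with confidence
radius `R > 0`, i.e. `x i = (1/|N_i|) ∑_{j ∈ N_i} x j` where `N_i = { j : ‖x i - x j‖ ≤ R }`,
then any two agents within distance `R` have identical opinions: `‖x i - x j‖ ≤ R → x i = x j`.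
Hence at steady state the agents split into clusters with exact internal consensus and
pairwise distance greater than `R` between distinct cluster opinions. -/
theorem hegselmann_krause_fixed_point_clusters
    {n m : ℕ}
    (R : ℝ) (hR : 0 < R)
    (x : Fin n → EuclideanSpace ℝ (Fin m))
    (hfix : ∀ i,
      x i =
        (((Finset.univ.filter fun j => ‖x i - x j‖ ≤ R).card : ℝ))⁻¹ •
          ∑ j ∈ Finset.univ.filter fun j => ‖x i - x j‖ ≤ R, x j) :
    ∀ i j, ‖x i - x j‖ ≤ R → x i = x j := by
  have : Std.Symm fun i j => ‖x i - x j‖ ≤ R := ⟨fun i j h => by rwa [norm_sub_rev]⟩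
  have hself (i : Fin n) : i ∈ univ.filter fun j => ‖x i - x j‖ ≤ R := by simp [hR.le]
  intro i j
  exact eq_of_rel_of_forall_sum_sub_eq_zero
    fun i => sum_sub_eq_zero_of_eq_inv_card_smul_sum ⟨i, hself i⟩ x (hfix i)
end
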